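/- The bialgebra A of parenthesized words with the map S is a Hopf algebra: for every element X of A, m[(S ⊗ id_A)(Δ(X))] = m[(id_A ⊗ S)(Δ(X))] = E(ē(X)); in particular, for every parenthesized word X ≠ e one has m[(S ⊗ id_A)(Δ(X))] = 0. -/

import Mathlib

open scoped TensorProduct

/-- Rooted trees with vertices labeled by letters `x_i` (`i : ℕ`): an irreducible
parenthesized word `(X x_i)` is a root labeled `x_i` with the forest `X` attached. -/
inductive PTree : Type
  | node : ℕ → List PTree → PTree

/-- Parenthesized words: finite commutative products (multisets) of irreducible words. -/
abbrev Word : Type := Multiset PTree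

/-- The free ℚ-vector space `A` on parenthesized words, as a commutative unital
associative ℚ-algebra (the product is induced by the product of words, the unit is the
empty word `e = word 0`). -/
abbrev A : Type := AddMonoidAlgebra ℚ Word

/-- The basis vector of `A` corresponding to a parenthesized word. -/
noncomputable def word (m : Word) : A := AddMonoidAlgebra.single m 1

/-- The grafting operator `B_{(x_i)}`, sending a word `X` to `(X x_i)`. -/
noncomputable def B (i : ℕ) : A →ₗ[ℚ] A :=
  AddMonoidAlgebra.mapDomainLinearMap ℚ ℚ (fun m : Word => ({PTree.node i m.toList} : Word))

/-- The counit `ē : A → ℚ`, killing every nonempty word and sending `e` to `1`. -/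
noncomputable def ebar : A →ₗ[ℚ] ℚ := Finsupp.lapply 0 ∘ₗ (AddMonoidAlgebra.coeffLinearEquiv ℚ).toLinearMap

/-- The unit map `E : ℚ → A`, `q ↦ q • e`. -/
noncomputable def Eu : ℚ →ₗ[ℚ] A := AddMonoidAlgebra.lsingle 0

/-- The projection `P₁ = id_A − E ∘ ē`. -/
noncomputable def P1 : A →ₗ[ℚ] A := LinearMap.id - Eu.comp ebar


set_option maxHeartbeats 1000000
set_option synthInstance.maxHeartbeats 200000

/- auxiliary development -/


def PTree.size : PTree → ℕ
  | .node _ l => 1 + (l.attach.map (fun x => PTree.size x.1)).sum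
decreasing_by
  have h := List.sizeOf_lt_of_mem x.2
  simp at h ⊢
  omega

lemma PTree.size_node (i : ℕ) (l : List PTree) :
    (PTree.node i l).size = 1 + (l.map PTree.size).sum := by
  simp [PTree.size]

lemma PTree.size_pos (t : PTree) : 1 ≤ t.size := by
  cases t with
  | node i l => rw [PTree.size_node]; omega

def wdeg (m : Word) : ℕ := (m.map PTree.size).sum

lemma wdeg_zero : wdeg 0 = 0 := by simp [wdeg]

lemma wdeg_add (a b : Word) : wdeg (a + b) = wdeg a + wdeg b := by simp [wdeg]

lemma wdeg_singleton (t : PTree) : wdeg {t} = t.size := by simp [wdeg]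

lemma wdeg_coe (l : List PTree) : wdeg (l : Word) = (l.map PTree.size).sum := by
  simp [wdeg]

lemma wdeg_node (i : ℕ) (l : List PTree) :
    wdeg ({PTree.node i l} : Word) = 1 + wdeg (l : Word) := by
  rw [wdeg_singleton, PTree.size_node, wdeg_coe]

lemma wdeg_node' (i : ℕ) (m : Word) :
    wdeg ({PTree.node i m.toList} : Word) = 1 + wdeg m := by
  rw [wdeg_node, Multiset.coe_toList]

lemma wdeg_pos {m : Word} (h : m ≠ 0) : 1 ≤ wdeg m := by
  obtain ⟨t, ht⟩ := Multiset.exists_mem_of_ne_zero h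
  obtain ⟨s, rfl⟩ := Multiset.exists_cons_of_mem ht
  rw [← Multiset.singleton_add, wdeg_add, wdeg_singleton]
  have := t.size_pos; omega

/- basic algebra facts -/

lemma word_zero : (word 0 : A) = 1 := (AddMonoidAlgebra.one_def).symm

lemma word_mul (X Y : Word) : word X * word Y = word (X + Y) := by
  simp [word, AddMonoidAlgebra.single_mul_single]

lemma word_cons (a : PTree) (s : Word) : word {a} * word s = word (a ::ₘ s) := by
  rw [word_mul, Multiset.singleton_add]

lemma ebar_word_zero : ebar (word 0) = 1 := by
  show (Finsupp.single (0 : Word) (1 : ℚ)) 0 = 1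
  simp

lemma ebar_word_ne {m : Word} (h : m ≠ 0) : ebar (word m) = 0 := by
  show (Finsupp.single m (1 : ℚ)) 0 = 0
  exact Finsupp.single_eq_of_ne' h

lemma Eu_apply (q : ℚ) : Eu q = q • (word 0) := by
  simp [Eu, word, AddMonoidAlgebra.smul_single']

lemma Eu_one : Eu 1 = word 0 := by rw [Eu_apply, one_smul]

lemma Eu_ebar (a : A) : Eu (ebar a) = ebar a • word 0 := Eu_apply _

lemma ebar_Eu (q : ℚ) : ebar (Eu q) = q := by
  show (Finsupp.single (0 : Word) q) 0 = q
  simp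

lemma P1_apply (a : A) : P1 a = a - Eu (ebar a) := rfl

lemma P1_word_zero : P1 (word 0) = 0 := by
  rw [P1_apply, ebar_word_zero, Eu_one, sub_self]

lemma P1_word_ne {m : Word} (h : m ≠ 0) : P1 (word m) = word m := by
  rw [P1_apply, ebar_word_ne h, map_zero, sub_zero]

lemma ebar_P1 (a : A) : ebar (P1 a) = 0 := by
  rw [P1_apply, map_sub, ebar_Eu, sub_self]

lemma P1_P1 (a : A) : P1 (P1 a) = P1 a := by
  rw [P1_apply (P1 a), ebar_P1, map_zero, sub_zero]

lemma B_word (i : ℕ) (m : Word) : B i (word m) = word {PTree.node i m.toList} := by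
  show AddMonoidAlgebra.mapDomainLinearMap ℚ ℚ _ (AddMonoidAlgebra.single m (1:ℚ)) =
    AddMonoidAlgebra.single _ 1
  exact AddMonoidAlgebra.mapDomainLinearMap_single _ _ _

/- extensionality from the basis -/

lemma single_eq_smul_word (m : Word) (q : ℚ) : (AddMonoidAlgebra.single m q : A) = q • word m := by
  simp [word, AddMonoidAlgebra.smul_single']

lemma wext {M : Type*} [AddCommMonoid M] [Module ℚ M] {f g : A →ₗ[ℚ] M}
    (h : ∀ m, f (word m) = g (word m)) : f = g := by
  refine AddMonoidAlgebra.lhom_ext' fun a => LinearMap.ext fun b => ?_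
  simp only [LinearMap.comp_apply, AddMonoidAlgebra.lsingle_apply]
  rw [single_eq_smul_word, map_smul, map_smul]
  exact congrArg (b • ·) (h a)

lemma ebar_B (i : ℕ) (a : A) : ebar (B i a) = 0 := by
  have : ebar ∘ₗ B i = 0 := wext fun m => by
    rw [LinearMap.comp_apply, B_word, ebar_word_ne (by simp)]; rfl
  exact LinearMap.congr_fun this a

lemma P1_B (i : ℕ) (a : A) : P1 (B i a) = B i a := by
  rw [P1_apply, ebar_B, map_zero, sub_zero]

/- multiplicativity from the basis -/

lemma mul_of_basis {M : Type*} [Semiring M] [Algebra ℚ M] (f : A →ₗ[ℚ] M)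
    (h : ∀ x y : Word, f (word x * word y) = f (word x) * f (word y)) :
    ∀ a b : A, f (a * b) = f a * f b := by
  have : (LinearMap.mul ℚ A).compr₂ f = (LinearMap.mul ℚ M).compl₁₂ f f :=
    wext fun x => wext fun y => by
      simp only [LinearMap.compr₂_apply, LinearMap.compl₁₂_apply, LinearMap.mul_apply']
      exact h x y
  intro a b
  exact LinearMap.congr_fun (LinearMap.congr_fun this a) b
/- ======== stage 2 helpers (to append) ======== -/

lemma ebar_mul : ∀ a b : A, ebar (a * b) = ebar a * ebar b := by
  refine mul_of_basis ebar fun x y => ?_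
  rw [word_mul]
  by_cases hx : x = 0
  · subst hx; rw [zero_add, ebar_word_zero, one_mul]
  · have hxy : x + y ≠ 0 := fun h => hx (by
      have := congrArg Multiset.card h
      simp at this
      exact this.1)
    rw [ebar_word_ne hx, ebar_word_ne hxy, zero_mul]

lemma Eu_mul (p q : ℚ) : Eu (p * q) = Eu p * Eu q := by
  rw [Eu_apply, Eu_apply, Eu_apply, smul_mul_smul_comm, word_mul, add_zero]

noncomputable def cL : A ⊗[ℚ] A →ₗ[ℚ] A := TensorProduct.lift ((LinearMap.lsmul ℚ A).comp ebar)
noncomputable def cR : A ⊗[ℚ] A →ₗ[ℚ] A :=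
  TensorProduct.lift (((LinearMap.lsmul ℚ A).comp ebar).flip)

lemma cL_tmul (a b : A) : cL (a ⊗ₜ[ℚ] b) = ebar a • b := rfl
lemma cR_tmul (a b : A) : cR (a ⊗ₜ[ℚ] b) = ebar b • a := rfl

lemma cL_mul : ∀ u v : A ⊗[ℚ] A, cL (u * v) = cL u * cL v := by
  intro u v
  induction u using TensorProduct.induction_on with
  | zero => simp
  | add x y hx hy => simp [add_mul, hx, hy]
  | tmul a b =>
    induction v using TensorProduct.induction_on with
    | zero => simp
    | add x y hx hy => simp [mul_add, hx, hy]
    | tmul c d =>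
      rw [Algebra.TensorProduct.tmul_mul_tmul, cL_tmul, cL_tmul, cL_tmul, ebar_mul,
        smul_mul_smul_comm]

lemma cR_mul : ∀ u v : A ⊗[ℚ] A, cR (u * v) = cR u * cR v := by
  intro u v
  induction u using TensorProduct.induction_on with
  | zero => simp
  | add x y hx hy => simp [add_mul, hx, hy]
  | tmul a b =>
    induction v using TensorProduct.induction_on with
    | zero => simp
    | add x y hx hy => simp [mul_add, hx, hy]
    | tmul c d =>
      rw [Algebra.TensorProduct.tmul_mul_tmul, cR_tmul, cR_tmul, cR_tmul, ebar_mul,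
        smul_mul_smul_comm]

lemma map_mul_tensor {C D : Type*} [CommSemiring C] [CommSemiring D] [Algebra ℚ C] [Algebra ℚ D]
    (f : A →ₗ[ℚ] C) (g : A →ₗ[ℚ] D)
    (hf : ∀ a b, f (a * b) = f a * f b) (hg : ∀ a b, g (a * b) = g a * g b) :
    ∀ u v : A ⊗[ℚ] A,
      TensorProduct.map f g (u * v) = TensorProduct.map f g u * TensorProduct.map f g v := by
  intro u v
  induction u using TensorProduct.induction_on with
  | zero => simp
  | add x y hx hy => simp [add_mul, hx, hy]
  | tmul a b =>
    induction v using TensorProduct.induction_on with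
    | zero => simp
    | add x y hx hy => simp [mul_add, hx, hy]
    | tmul c d =>
      rw [Algebra.TensorProduct.tmul_mul_tmul, TensorProduct.map_tmul, TensorProduct.map_tmul,
        TensorProduct.map_tmul, Algebra.TensorProduct.tmul_mul_tmul, hf, hg]

lemma mul'_mul : ∀ u v : A ⊗[ℚ] A,
    LinearMap.mul' ℚ A (u * v) = LinearMap.mul' ℚ A u * LinearMap.mul' ℚ A v := by
  intro u v
  induction u using TensorProduct.induction_on with
  | zero => simp
  | add x y hx hy => simp [add_mul, hx, hy]
  | tmul a b =>
    induction v using TensorProduct.induction_on with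
    | zero => simp
    | add x y hx hy => simp [mul_add, hx, hy]
    | tmul c d =>
      rw [Algebra.TensorProduct.tmul_mul_tmul, LinearMap.mul'_apply, LinearMap.mul'_apply,
        LinearMap.mul'_apply]
      ring

lemma assoc_agree : ∀ w : (A ⊗[ℚ] A) ⊗[ℚ] A,
    (Algebra.TensorProduct.assoc ℚ ℚ ℚ A A A) w = TensorProduct.assoc ℚ A A A w := by
  intro w
  induction w using TensorProduct.induction_on with
  | zero => simp
  | add x y hx hy => simp [hx, hy]
  | tmul u c =>
    induction u using TensorProduct.induction_on with
    | zero => simp [TensorProduct.zero_tmul]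
    | add x y hx hy => rw [TensorProduct.add_tmul, map_add, map_add, hx, hy]
    | tmul a b => rw [Algebra.TensorProduct.assoc_tmul, TensorProduct.assoc_tmul]

lemma assoc_mul (w w' : (A ⊗[ℚ] A) ⊗[ℚ] A) :
    TensorProduct.assoc ℚ A A A (w * w') =
      TensorProduct.assoc ℚ A A A w * TensorProduct.assoc ℚ A A A w' := by
  rw [← assoc_agree, ← assoc_agree, ← assoc_agree, map_mul]

lemma map_map {M N P Q : Type*} [AddCommMonoid M] [AddCommMonoid N] [AddCommMonoid P]
    [AddCommMonoid Q] [Module ℚ M] [Module ℚ N] [Module ℚ P] [Module ℚ Q]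
    (f : N →ₗ[ℚ] P) (g : Q →ₗ[ℚ] M) (f' : A →ₗ[ℚ] N) (g' : A →ₗ[ℚ] Q) (u : A ⊗[ℚ] A) :
    TensorProduct.map f g (TensorProduct.map f' g' u) =
      TensorProduct.map (f ∘ₗ f') (g ∘ₗ g') u :=
  LinearMap.congr_fun (TensorProduct.map_comp f g f' g').symm u

lemma assoc_nat (f g h : A →ₗ[ℚ] A) : ∀ w : (A ⊗[ℚ] A) ⊗[ℚ] A,
    TensorProduct.assoc ℚ A A A
        (TensorProduct.map (TensorProduct.map f g) h w) =
      TensorProduct.map f (TensorProduct.map g h) (TensorProduct.assoc ℚ A A A w) := by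
  intro w
  induction w using TensorProduct.induction_on with
  | zero => simp
  | add x y hx hy => simp [hx, hy]
  | tmul u c =>
    induction u using TensorProduct.induction_on with
    | zero => simp [TensorProduct.zero_tmul]
    | add x y hx hy =>
      simp only [TensorProduct.add_tmul, LinearMap.map_add, LinearEquiv.map_add, hx, hy]
    | tmul a b =>
      simp only [TensorProduct.map_tmul, TensorProduct.assoc_tmul]

lemma mul_assoc_tensor : ∀ w : (A ⊗[ℚ] A) ⊗[ℚ] A,
    LinearMap.mul' ℚ A (TensorProduct.map (LinearMap.mul' ℚ A) LinearMap.id w) =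
      LinearMap.mul' ℚ A
        (TensorProduct.map LinearMap.id (LinearMap.mul' ℚ A)
          (TensorProduct.assoc ℚ A A A w)) := by
  intro w
  induction w using TensorProduct.induction_on with
  | zero => simp
  | add x y hx hy => simp [hx, hy]
  | tmul u c =>
    induction u using TensorProduct.induction_on with
    | zero => simp [TensorProduct.zero_tmul]
    | add x y hx hy =>
      rw [TensorProduct.add_tmul, map_add, map_add, map_add, map_add, map_add, hx, hy]
    | tmul a b =>
      rw [TensorProduct.map_tmul, TensorProduct.assoc_tmul, TensorProduct.map_tmul,
        LinearMap.mul'_apply, LinearMap.mul'_apply, LinearMap.mul'_apply, LinearMap.mul'_apply,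
        LinearMap.id_apply, LinearMap.id_apply, mul_assoc]

lemma mapEuEbar_left {M : Type*} [AddCommMonoid M] [Module ℚ M] (g : A →ₗ[ℚ] M) :
    ∀ u : A ⊗[ℚ] A,
      TensorProduct.map (Eu ∘ₗ ebar) g u = word 0 ⊗ₜ[ℚ] g (cL u) := by
  intro u
  induction u using TensorProduct.induction_on with
  | zero => simp
  | add x y hx hy => rw [map_add, hx, hy, map_add, map_add, TensorProduct.tmul_add]
  | tmul a b =>
    rw [TensorProduct.map_tmul, LinearMap.comp_apply, Eu_apply, cL_tmul, map_smul,
      TensorProduct.smul_tmul]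

lemma mapEuEbar_right {M : Type*} [AddCommMonoid M] [Module ℚ M] (f : A →ₗ[ℚ] M) :
    ∀ u : A ⊗[ℚ] A,
      TensorProduct.map f (Eu ∘ₗ ebar) u = f (cR u) ⊗ₜ[ℚ] word 0 := by
  intro u
  induction u using TensorProduct.induction_on with
  | zero => simp
  | add x y hx hy => rw [map_add, hx, hy, map_add, map_add, TensorProduct.add_tmul]
  | tmul a b =>
    rw [TensorProduct.map_tmul, LinearMap.comp_apply, Eu_apply, cR_tmul, map_smul,
      TensorProduct.tmul_smul, TensorProduct.smul_tmul']

lemma map_sub_left_apply (f f' g : A →ₗ[ℚ] A) (u : A ⊗[ℚ] A) :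
    TensorProduct.map (f - f') g u = TensorProduct.map f g u - TensorProduct.map f' g u := by
  induction u using TensorProduct.induction_on with
  | zero => simp
  | add x y hx hy =>
    rw [map_add, hx, hy, map_add, map_add]
    abel
  | tmul a b => rw [TensorProduct.map_tmul, TensorProduct.map_tmul, TensorProduct.map_tmul,
      LinearMap.sub_apply, TensorProduct.sub_tmul]

lemma map_add_right_apply (f g g' : A →ₗ[ℚ] A) (u : A ⊗[ℚ] A) :
    TensorProduct.map f (g + g') u = TensorProduct.map f g u + TensorProduct.map f g' u :=
  LinearMap.congr_fun (TensorProduct.map_add_right f g g') u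

/- more helpers -/

noncomputable def rT : A →ₗ[ℚ] A ⊗[ℚ] A := (TensorProduct.mk ℚ A A).flip (word 0)
noncomputable def lT : A →ₗ[ℚ] A ⊗[ℚ] A := TensorProduct.mk ℚ A A (word 0)

lemma rT_apply (a : A) : rT a = a ⊗ₜ[ℚ] word 0 := rfl
lemma lT_apply (a : A) : lT a = word 0 ⊗ₜ[ℚ] a := rfl

lemma id_eq_P1_add : (LinearMap.id : A →ₗ[ℚ] A) = P1 + Eu ∘ₗ ebar :=
  (sub_add_cancel LinearMap.id (Eu ∘ₗ ebar)).symm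

lemma map_sub_left_apply' {M N : Type*} [AddCommGroup M] [AddCommGroup N] [Module ℚ M]
    [Module ℚ N] (f f' : A →ₗ[ℚ] M) (g : A →ₗ[ℚ] N) (u : A ⊗[ℚ] A) :
    TensorProduct.map (f - f') g u = TensorProduct.map f g u - TensorProduct.map f' g u := by
  induction u using TensorProduct.induction_on with
  | zero => simp
  | add x y hx hy =>
    rw [map_add, hx, hy, map_add, map_add]
    abel
  | tmul a b => rw [TensorProduct.map_tmul, TensorProduct.map_tmul, TensorProduct.map_tmul,
      LinearMap.sub_apply, TensorProduct.sub_tmul]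

lemma map_add_left_apply' {M N : Type*} [AddCommMonoid M] [AddCommMonoid N] [Module ℚ M]
    [Module ℚ N] (f f' : A →ₗ[ℚ] M) (g : A →ₗ[ℚ] N) (u : A ⊗[ℚ] A) :
    TensorProduct.map (f + f') g u = TensorProduct.map f g u + TensorProduct.map f' g u :=
  LinearMap.congr_fun (TensorProduct.map_add_left f f' g) u

lemma map_add_right_apply' {M N : Type*} [AddCommMonoid M] [AddCommMonoid N] [Module ℚ M]
    [Module ℚ N] (f : A →ₗ[ℚ] M) (g g' : A →ₗ[ℚ] N) (u : A ⊗[ℚ] A) :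
    TensorProduct.map f (g + g') u = TensorProduct.map f g u + TensorProduct.map f g' u :=
  LinearMap.congr_fun (TensorProduct.map_add_right f g g') u

lemma assoc_tmul_word0 : ∀ v : A ⊗[ℚ] A,
    TensorProduct.assoc ℚ A A A (v ⊗ₜ[ℚ] word 0) = TensorProduct.map LinearMap.id rT v := by
  intro v
  induction v using TensorProduct.induction_on with
  | zero => rw [TensorProduct.zero_tmul, map_zero, map_zero]
  | add x y hx hy => rw [TensorProduct.add_tmul, map_add, hx, hy, map_add]
  | tmul a b => rw [TensorProduct.assoc_tmul, TensorProduct.map_tmul, LinearMap.id_apply,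
      rT_apply]

/- filtration by right-leg degree -/

noncomputable def Wle (n : ℕ) : Submodule ℚ (A ⊗[ℚ] A) :=
  Submodule.span ℚ {x | ∃ p q : Word, wdeg q ≤ n ∧ x = word p ⊗ₜ[ℚ] word q}

lemma mem_Wle {p q : Word} {n : ℕ} (h : wdeg q ≤ n) : word p ⊗ₜ[ℚ] word q ∈ Wle n :=
  Submodule.subset_span ⟨p, q, h, rfl⟩

lemma Wle_mono {j k : ℕ} (h : j ≤ k) : Wle j ≤ Wle k := by
  apply Submodule.span_mono
  rintro x ⟨p, q, hq, rfl⟩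
  exact ⟨p, q, le_trans hq h, rfl⟩

lemma Wle_mul {j k : ℕ} {u v : A ⊗[ℚ] A} (hu : u ∈ Wle j) (hv : v ∈ Wle k) :
    u * v ∈ Wle (j + k) := by
  induction hu using Submodule.span_induction with
  | mem x hx =>
    obtain ⟨p, q, hq, rfl⟩ := hx
    induction hv using Submodule.span_induction with
    | mem y hy =>
      obtain ⟨p', q', hq', rfl⟩ := hy
      rw [Algebra.TensorProduct.tmul_mul_tmul, word_mul, word_mul]
      exact mem_Wle (by rw [wdeg_add]; omega)
    | zero => rw [mul_zero]; exact Submodule.zero_mem _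
    | add y z _ _ hy hz => rw [mul_add]; exact Submodule.add_mem _ hy hz
    | smul c y _ hy => rw [mul_smul_comm]; exact Submodule.smul_mem _ _ hy
  | zero => rw [zero_mul]; exact Submodule.zero_mem _
  | add x y _ _ hx hy => rw [add_mul]; exact Submodule.add_mem _ hx hy
  | smul c x _ hx => rw [smul_mul_assoc]; exact Submodule.smul_mem _ _ hx

lemma Wle_mapP1B (i : ℕ) {k : ℕ} {u : A ⊗[ℚ] A} (hu : u ∈ Wle k) :
    TensorProduct.map P1 (B i) u ∈ Wle (k + 1) := by
  induction hu using Submodule.span_induction with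
  | mem x hx =>
    obtain ⟨p, q, hq, rfl⟩ := hx
    rw [TensorProduct.map_tmul, B_word]
    by_cases hp : p = 0
    · subst hp; rw [P1_word_zero, TensorProduct.zero_tmul]; exact Submodule.zero_mem _
    · rw [P1_word_ne hp]
      exact mem_Wle (by rw [wdeg_node']; omega)
  | zero => rw [map_zero]; exact Submodule.zero_mem _
  | add x y _ _ hx hy => rw [map_add]; exact Submodule.add_mem _ hx hy
  | smul c x _ hx => rw [map_smul]; exact Submodule.smul_mem _ _ hx

lemma cL_mapP1B (i : ℕ) : ∀ u : A ⊗[ℚ] A, cL (TensorProduct.map P1 (B i) u) = 0 := by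
  intro u
  induction u using TensorProduct.induction_on with
  | zero => rw [map_zero, map_zero]
  | add x y hx hy => rw [map_add, map_add, hx, hy, add_zero]
  | tmul a b => rw [TensorProduct.map_tmul, cL_tmul, ebar_P1, zero_smul]

lemma cR_mapP1B (i : ℕ) : ∀ u : A ⊗[ℚ] A, cR (TensorProduct.map P1 (B i) u) = 0 := by
  intro u
  induction u using TensorProduct.induction_on with
  | zero => rw [map_zero, map_zero]
  | add x y hx hy => rw [map_add, map_add, hx, hy, add_zero]
  | tmul a b => rw [TensorProduct.map_tmul, cR_tmul, ebar_B, zero_smul]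

theorem words_form_hopf_algebra
    (Δ : A →ₗ[ℚ] A ⊗[ℚ] A)
    (hΔe : Δ (word 0) = word 0 ⊗ₜ[ℚ] word 0)
    (hΔB : ∀ (i : ℕ) (l : List PTree),
      Δ (word {PTree.node i l}) =
        word {PTree.node i l} ⊗ₜ[ℚ] word 0 + word 0 ⊗ₜ[ℚ] word {PTree.node i l} +
          TensorProduct.map LinearMap.id (B i)
            (TensorProduct.map P1 LinearMap.id (Δ (word (l : Multiset PTree)))))
    (hΔm : ∀ X Y : Word, Δ (word X * word Y) = Δ (word X) * Δ (word Y))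
    (S : A →ₗ[ℚ] A)
    (hSe : S (word 0) = word 0)
    (hSm : ∀ X Y : Word, S (word X * word Y) = S (word X) * S (word Y))
    (hSB : ∀ (i : ℕ) (l : List PTree),
      S (word {PTree.node i l}) =
        -word {PTree.node i l} -
          LinearMap.mul' ℚ A
            (TensorProduct.map S LinearMap.id
              (TensorProduct.map P1 P1 (Δ (word {PTree.node i l}))))) :
    (∀ a : A,
      LinearMap.mul' ℚ A (TensorProduct.map S LinearMap.id (Δ a)) = Eu (ebar a) ∧
      LinearMap.mul' ℚ A (TensorProduct.map LinearMap.id S (Δ a)) = Eu (ebar a)) ∧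
    ∀ m : Word, m ≠ 0 →
      LinearMap.mul' ℚ A (TensorProduct.map S LinearMap.id (Δ (word m))) = 0 := by
  classical
  have hμt : ∀ a b : A, LinearMap.mul' ℚ A (a ⊗ₜ[ℚ] b) = a * b := fun a b =>
    LinearMap.mul'_apply
  have Δmul : ∀ a b : A, Δ (a * b) = Δ a * Δ b := mul_of_basis Δ hΔm
  have Smul : ∀ a b : A, S (a * b) = S a * S b := mul_of_basis S hSm
  have hP1P1 : P1 ∘ₗ P1 = P1 := LinearMap.ext P1_P1
  have hP1B : ∀ i, P1 ∘ₗ B i = B i := fun i => LinearMap.ext (P1_B i)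
  have hΔB' : ∀ (i : ℕ) (l : List PTree),
      Δ (word {PTree.node i l}) =
        word {PTree.node i l} ⊗ₜ[ℚ] word 0 + word 0 ⊗ₜ[ℚ] word {PTree.node i l} +
          TensorProduct.map P1 (B i) (Δ (word (l : Multiset PTree))) := by
    intro i l
    rw [hΔB i l, map_map, LinearMap.id_comp, LinearMap.comp_id]
  have hP2 : ∀ (i : ℕ) (l : List PTree),
      TensorProduct.map P1 P1 (Δ (word {PTree.node i l})) =
        TensorProduct.map P1 (B i) (Δ (word (l : Multiset PTree))) := by
    intro i l
    rw [hΔB' i l, map_add, map_add, TensorProduct.map_tmul, TensorProduct.map_tmul, map_map,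
      P1_word_zero, TensorProduct.tmul_zero, TensorProduct.zero_tmul, hP1P1, hP1B, zero_add,
      zero_add]
  have hSB' : ∀ (i : ℕ) (l : List PTree),
      S (word {PTree.node i l}) =
        - word {PTree.node i l} -
          LinearMap.mul' ℚ A (TensorProduct.map S LinearMap.id
            (TensorProduct.map P1 (B i) (Δ (word (l : Multiset PTree))))) := by
    intro i l; rw [hSB i l, hP2]
  -- left antipode identity: tree case
  have hLtree : ∀ t : PTree,
      LinearMap.mul' ℚ A (TensorProduct.map S LinearMap.id (Δ (word {t}))) = 0 := by
    intro t
    cases t with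
    | node i l =>
      rw [hΔB' i l, map_add, map_add, map_add, map_add, TensorProduct.map_tmul,
        TensorProduct.map_tmul, hμt, hμt, LinearMap.id_apply, LinearMap.id_apply, hSe,
        hSB' i l, word_zero, mul_one, one_mul]
      ring
  -- left antipode identity on the basis
  have hL : ∀ m : Word,
      LinearMap.mul' ℚ A (TensorProduct.map S LinearMap.id (Δ (word m))) =
        Eu (ebar (word m)) := by
    intro m
    induction m using Multiset.induction_on with
    | empty =>
      rw [hΔe, TensorProduct.map_tmul, hμt, hSe, LinearMap.id_apply, ebar_word_zero, Eu_one,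
        word_zero, mul_one]
    | cons a s ih =>
      rw [← word_cons, hΔm, map_mul_tensor S LinearMap.id Smul (fun _ _ => rfl), mul'_mul,
        hLtree, zero_mul, word_cons, ebar_word_ne (by simp), map_zero]
  -- counit identities
  have hcLtree : ∀ t : PTree, cL (Δ (word {t})) = word {t} := by
    intro t
    cases t with
    | node i l =>
      rw [hΔB' i l, map_add, map_add, cL_tmul, cL_tmul, cL_mapP1B, ebar_word_zero, one_smul,
        ebar_word_ne (by simp), zero_smul, zero_add, add_zero]
  have hcL : ∀ m : Word, cL (Δ (word m)) = word m := by
    intro m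
    induction m using Multiset.induction_on with
    | empty => rw [hΔe, cL_tmul, ebar_word_zero, one_smul]
    | cons a s ih => rw [← word_cons, hΔm, cL_mul, hcLtree, ih, word_cons]
  have hcRtree : ∀ t : PTree, cR (Δ (word {t})) = word {t} := by
    intro t
    cases t with
    | node i l =>
      rw [hΔB' i l, map_add, map_add, cR_tmul, cR_tmul, cR_mapP1B, ebar_word_zero, one_smul,
        ebar_word_ne (by simp), zero_smul, add_zero, add_zero]
  have hcR : ∀ m : Word, cR (Δ (word m)) = word m := by
    intro m
    induction m using Multiset.induction_on with
    | empty => rw [hΔe, cR_tmul, ebar_word_zero, one_smul]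
    | cons a s ih => rw [← word_cons, hΔm, cR_mul, hcRtree, ih, word_cons]
  have hcLa : ∀ a : A, cL (Δ a) = a := by
    have h : cL ∘ₗ Δ = LinearMap.id := wext fun m => hcL m
    exact fun a => LinearMap.congr_fun h a
  have hcRa : ∀ a : A, cR (Δ a) = a := by
    have h : cR ∘ₗ Δ = LinearMap.id := wext fun m => hcR m
    exact fun a => LinearMap.congr_fun h a
  -- decomposition of (id ⊗ B i) ∘ Δ
  have hmapidB : ∀ (i : ℕ) (a : A), TensorProduct.map LinearMap.id (B i) (Δ a) =
      TensorProduct.map P1 (B i) (Δ a) + word 0 ⊗ₜ[ℚ] B i a := by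
    intro i a
    rw [id_eq_P1_add, map_add_left_apply', mapEuEbar_left, hcLa]
  have hg1 : ∀ i : ℕ, TensorProduct.map LinearMap.id (B i) ∘ₗ Δ =
      (TensorProduct.map P1 (B i)) ∘ₗ Δ + lT ∘ₗ B i :=
    fun i => LinearMap.ext fun a => by
      rw [LinearMap.comp_apply, hmapidB, LinearMap.add_apply, LinearMap.comp_apply,
        LinearMap.comp_apply, lT_apply]
  -- Δ ∘ B i, map-level
  have hΔBcomp : ∀ i : ℕ, Δ ∘ₗ B i =
      rT ∘ₗ B i + lT ∘ₗ B i + (TensorProduct.map P1 (B i)) ∘ₗ Δ := by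
    intro i
    refine wext fun m => ?_
    rw [LinearMap.comp_apply, LinearMap.add_apply, LinearMap.add_apply, LinearMap.comp_apply,
      LinearMap.comp_apply, LinearMap.comp_apply, B_word, rT_apply, lT_apply]
    have h := hΔB' i m.toList
    rw [Multiset.coe_toList] at h
    exact h
  have hΔP1 : Δ ∘ₗ P1 = Δ - Δ ∘ₗ (Eu ∘ₗ ebar) := LinearMap.ext fun a => by
    rw [LinearMap.comp_apply, P1_apply, map_sub, LinearMap.sub_apply, LinearMap.comp_apply,
      LinearMap.comp_apply]
  have E2 : ∀ (i : ℕ) (v : A ⊗[ℚ] A),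
      TensorProduct.assoc ℚ A A A (TensorProduct.map (Δ ∘ₗ (Eu ∘ₗ ebar)) (B i) v) =
        word 0 ⊗ₜ[ℚ] (word 0 ⊗ₜ[ℚ] B i (cL v)) := by
    intro i v
    have h1 : TensorProduct.map (Δ ∘ₗ (Eu ∘ₗ ebar)) (B i) v =
        TensorProduct.map Δ LinearMap.id (TensorProduct.map (Eu ∘ₗ ebar) (B i) v) := by
      rw [map_map, LinearMap.id_comp]
    rw [h1, mapEuEbar_left, TensorProduct.map_tmul, hΔe, LinearMap.id_apply,
      TensorProduct.assoc_tmul]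
  -- coassociativity
  have CA : ∀ m : Word,
      TensorProduct.map LinearMap.id Δ (Δ (word m)) =
        TensorProduct.assoc ℚ A A A (TensorProduct.map Δ LinearMap.id (Δ (word m))) := by
    have main : ∀ n, ∀ m : Word, wdeg m = n →
        TensorProduct.map LinearMap.id Δ (Δ (word m)) =
          TensorProduct.assoc ℚ A A A (TensorProduct.map Δ LinearMap.id (Δ (word m))) := by
      intro n
      induction n using Nat.strong_induction_on with
      | _ n ih =>
        intro m hm
        by_cases hm0 : m = 0
        · subst hm0
          simp only [hΔe, TensorProduct.map_tmul, LinearMap.id_coe, id_eq,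
            TensorProduct.assoc_tmul]
        · obtain ⟨a, ha⟩ := Multiset.exists_mem_of_ne_zero hm0
          obtain ⟨s, rfl⟩ := Multiset.exists_cons_of_mem ha
          by_cases hs : s = 0
          · -- tree case
            subst hs
            rw [Multiset.cons_zero] at hm ⊢
            cases a with
            | node i l =>
              have hwl : wdeg (l : Word) < n := by rw [← hm, wdeg_node]; omega
              have CAX := ih _ hwl (l : Word) rfl
              have c1 : TensorProduct.map Δ (B i) (Δ (word (l : Multiset PTree))) =
                  TensorProduct.map (TensorProduct.map LinearMap.id LinearMap.id) (B i)
                    (TensorProduct.map Δ LinearMap.id (Δ (word (l : Multiset PTree)))) := by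
                rw [map_map, TensorProduct.map_id, LinearMap.id_comp, LinearMap.comp_id]
              have c2 : TensorProduct.assoc ℚ A A A
                    (TensorProduct.map Δ (B i) (Δ (word (l : Multiset PTree)))) =
                  TensorProduct.map LinearMap.id
                    ((TensorProduct.map LinearMap.id (B i)) ∘ₗ Δ)
                    (Δ (word (l : Multiset PTree))) := by
                rw [c1, assoc_nat, ← CAX, map_map, LinearMap.id_comp]
              have hterm3R : TensorProduct.assoc ℚ A A A
                    (TensorProduct.map (Δ ∘ₗ P1) (B i) (Δ (word (l : Multiset PTree)))) =
                  TensorProduct.map P1 ((TensorProduct.map P1 (B i)) ∘ₗ Δ)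
                      (Δ (word (l : Multiset PTree))) +
                    word 0 ⊗ₜ[ℚ]
                      (TensorProduct.map P1 (B i) (Δ (word (l : Multiset PTree)))) +
                    TensorProduct.map P1 (lT ∘ₗ B i) (Δ (word (l : Multiset PTree))) := by
                rw [hΔP1, map_sub_left_apply', map_sub, c2, E2 i, hcLa, hg1 i,
                  map_add_right_apply', id_eq_P1_add, map_add_left_apply',
                  map_add_left_apply', mapEuEbar_left, mapEuEbar_left, hcLa]
                simp only [LinearMap.comp_apply, lT_apply]
                abel
              rw [hΔB' i l]
              simp only [map_add, TensorProduct.map_tmul, LinearMap.id_coe, id_eq,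
                hΔB' i l, hΔe, TensorProduct.tmul_add, TensorProduct.add_tmul,
                TensorProduct.assoc_tmul, assoc_tmul_word0, map_map, LinearMap.id_comp,
                LinearMap.comp_id, hΔBcomp i, map_add_right_apply', hterm3R, rT_apply,
                lT_apply]
              abel
          · -- product case
            have h1 : wdeg ({a} : Word) < n := by
              rw [← hm, ← Multiset.singleton_add, wdeg_add]
              have := wdeg_pos hs; omega
            have h2 : wdeg s < n := by
              rw [← hm, ← Multiset.singleton_add, wdeg_add, wdeg_singleton]
              have := PTree.size_pos a; omega
            have IH1 := ih _ h1 {a} rfl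
            have IH2 := ih _ h2 s rfl
            rw [← word_cons, hΔm,
              map_mul_tensor LinearMap.id Δ (fun _ _ => rfl) Δmul,
              map_mul_tensor Δ LinearMap.id Δmul (fun _ _ => rfl),
              assoc_mul, IH1, IH2]
    exact fun m => main (wdeg m) m rfl
  have CAa : ∀ a : A,
      TensorProduct.map LinearMap.id Δ (Δ a) =
        TensorProduct.assoc ℚ A A A (TensorProduct.map Δ LinearMap.id (Δ a)) := by
    have h : (TensorProduct.map LinearMap.id Δ) ∘ₗ Δ =
        (TensorProduct.assoc ℚ A A A : (A ⊗[ℚ] A) ⊗[ℚ] A →ₗ[ℚ] A ⊗[ℚ] (A ⊗[ℚ] A)) ∘ₗ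
          ((TensorProduct.map Δ LinearMap.id) ∘ₗ Δ) := by
      refine wext fun m => ?_
      simpa using CA m
    intro a
    simpa using LinearMap.congr_fun h a
  -- map-level left antipode identity
  have hLmap : ((LinearMap.mul' ℚ A) ∘ₗ TensorProduct.map S LinearMap.id) ∘ₗ Δ =
      Eu ∘ₗ ebar := wext fun m => by
    simpa using hL m
  have hLa : ∀ a : A,
      LinearMap.mul' ℚ A (TensorProduct.map S LinearMap.id (Δ a)) = Eu (ebar a) := fun a => by
    simpa using LinearMap.congr_fun hLmap a
  have TRIPLE : ∀ (f g h : A →ₗ[ℚ] A) (v : (A ⊗[ℚ] A) ⊗[ℚ] A),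
      LinearMap.mul' ℚ A
          (TensorProduct.map ((LinearMap.mul' ℚ A) ∘ₗ TensorProduct.map f g) h v) =
        LinearMap.mul' ℚ A (TensorProduct.map f ((LinearMap.mul' ℚ A) ∘ₗ TensorProduct.map g h)
          (TensorProduct.assoc ℚ A A A v)) := by
    intro f g h v
    induction v using TensorProduct.induction_on with
    | zero => simp only [map_zero]
    | add x y hx hy => simp only [map_add, hx, hy]
    | tmul u c =>
      induction u using TensorProduct.induction_on with
      | zero => simp only [TensorProduct.zero_tmul, map_zero, TensorProduct.map_tmul]
      | add x y hx hy => simp only [TensorProduct.add_tmul, map_add, hx, hy]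
      | tmul a b =>
        rw [TensorProduct.map_tmul, TensorProduct.assoc_tmul, TensorProduct.map_tmul,
          LinearMap.comp_apply, TensorProduct.map_tmul, LinearMap.comp_apply,
          TensorProduct.map_tmul, LinearMap.mul'_apply, LinearMap.mul'_apply,
          LinearMap.mul'_apply, LinearMap.mul'_apply, mul_assoc]
  -- the candidate for id ⋆ S
  set Tl : A →ₗ[ℚ] A := ((LinearMap.mul' ℚ A) ∘ₗ TensorProduct.map LinearMap.id S) ∘ₗ Δ
    with hTldef
  have hTlapp : ∀ a : A,
      Tl a = LinearMap.mul' ℚ A (TensorProduct.map LinearMap.id S (Δ a)) := fun a => rfl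
  -- S ⋆ Tl = S
  have W1 : ∀ a : A,
      LinearMap.mul' ℚ A (TensorProduct.map S Tl (Δ a)) = S a := by
    intro a
    have st1 : TensorProduct.map S Tl (Δ a) =
        TensorProduct.map S ((LinearMap.mul' ℚ A) ∘ₗ TensorProduct.map LinearMap.id S)
          (TensorProduct.map LinearMap.id Δ (Δ a)) := by
      rw [map_map, LinearMap.comp_id, hTldef]
    have st2 : TensorProduct.map ((LinearMap.mul' ℚ A) ∘ₗ TensorProduct.map S LinearMap.id) S
          (TensorProduct.map Δ LinearMap.id (Δ a)) =
        TensorProduct.map (Eu ∘ₗ ebar) S (Δ a) := by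
      rw [map_map, LinearMap.comp_id, hLmap]
    rw [st1, CAa a, ← TRIPLE S LinearMap.id S (TensorProduct.map Δ LinearMap.id (Δ a)), st2,
      mapEuEbar_left, hcLa, hμt, word_zero, one_mul]
  -- structure of the coproduct: right legs drop in degree
  have DS : ∀ m : Word, ∃ r ∈ Wle (wdeg m - 1),
      Δ (word m) = word 0 ⊗ₜ[ℚ] word m + r := by
    have main : ∀ n, ∀ m : Word, wdeg m = n → ∃ r ∈ Wle (wdeg m - 1),
        Δ (word m) = word 0 ⊗ₜ[ℚ] word m + r := by
      intro n
      induction n using Nat.strong_induction_on with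
      | _ n ih =>
        intro m hm
        by_cases hm0 : m = 0
        · subst hm0
          exact ⟨0, Submodule.zero_mem _, by rw [hΔe, add_zero]⟩
        · obtain ⟨a, ha⟩ := Multiset.exists_mem_of_ne_zero hm0
          obtain ⟨s, rfl⟩ := Multiset.exists_cons_of_mem ha
          by_cases hs : s = 0
          · -- tree case
            subst hs
            rw [Multiset.cons_zero] at hm ⊢
            cases a with
            | node i l =>
              have hwl : wdeg (l : Word) < n := by rw [← hm, wdeg_node]; omega
              obtain ⟨r', hr', hΔX⟩ := ih _ hwl (l : Word) rfl
              refine ⟨word {PTree.node i l} ⊗ₜ[ℚ] word 0 +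
                TensorProduct.map P1 (B i) r', ?_, ?_⟩
              · refine Submodule.add_mem _ (Wle_mono (Nat.zero_le _) (mem_Wle ?_)) ?_
                · rw [wdeg_zero]
                · rw [wdeg_node]
                  by_cases hl : wdeg (l : Word) = 0
                  · have hz : r' = 0 := by
                      have h0 : (l : Word) = 0 := by
                        by_contra hne
                        exact absurd hl (by have := wdeg_pos hne; omega)
                      rw [h0, hΔe] at hΔX
                      exact (add_eq_left.mp hΔX.symm)
                    rw [hz, map_zero]
                    exact Submodule.zero_mem _
                  · exact Wle_mono (by omega) (Wle_mapP1B i hr')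
              · rw [hΔB' i l, hΔX, map_add, TensorProduct.map_tmul, P1_word_zero,
                  TensorProduct.zero_tmul, zero_add]
                abel
          · -- product case
            have hwa : wdeg ({a} : Word) < n := by
              rw [← hm, ← Multiset.singleton_add, wdeg_add]
              have := wdeg_pos hs; omega
            have hws : wdeg s < n := by
              rw [← hm, ← Multiset.singleton_add, wdeg_add, wdeg_singleton]
              have := PTree.size_pos a; omega
            obtain ⟨r1, hr1, hΔ1⟩ := ih _ hwa {a} rfl
            obtain ⟨r2, hr2, hΔ2⟩ := ih _ hws s rfl
            have hsize : 1 ≤ wdeg ({a} : Word) := by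
              rw [wdeg_singleton]; exact PTree.size_pos a
            have hspos : 1 ≤ wdeg s := wdeg_pos hs
            have hn : wdeg (a ::ₘ s) = wdeg ({a} : Word) + wdeg s := by
              rw [← Multiset.singleton_add, wdeg_add]
            refine ⟨(word 0 ⊗ₜ[ℚ] word {a}) * r2 + r1 * (word 0 ⊗ₜ[ℚ] word s) + r1 * r2,
              ?_, ?_⟩
            · refine Submodule.add_mem _ (Submodule.add_mem _ ?_ ?_) ?_
              · refine Wle_mono ?_ (Wle_mul (mem_Wle (le_refl _)) hr2)
                omega
              · refine Wle_mono ?_ (Wle_mul hr1 (mem_Wle (le_refl _)))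
                omega
              · refine Wle_mono ?_ (Wle_mul hr1 hr2)
                omega
            · rw [← word_cons, hΔm, hΔ1, hΔ2]
              have hkey : (word 0 ⊗ₜ[ℚ] word {a}) * (word 0 ⊗ₜ[ℚ] word s) =
                  word 0 ⊗ₜ[ℚ] word (a ::ₘ s) := by
                rw [Algebra.TensorProduct.tmul_mul_tmul, word_mul, word_mul, add_zero,
                  Multiset.singleton_add]
              rw [add_mul, mul_add, mul_add, hkey, word_cons]
              abel
    exact fun m => main (wdeg m) m rfl
  -- right antipode identity on the basis
  have hT : ∀ m : Word,
      LinearMap.mul' ℚ A (TensorProduct.map LinearMap.id S (Δ (word m))) =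
        Eu (ebar (word m)) := by
    have main : ∀ n, ∀ m : Word, wdeg m = n →
        LinearMap.mul' ℚ A (TensorProduct.map LinearMap.id S (Δ (word m))) =
          Eu (ebar (word m)) := by
      intro n
      induction n using Nat.strong_induction_on with
      | _ n ih =>
        intro m hm
        by_cases hm0 : m = 0
        · subst hm0
          rw [hΔe, TensorProduct.map_tmul, hμt, hSe, LinearMap.id_apply, ebar_word_zero,
            Eu_one, word_zero, mul_one]
        · obtain ⟨r, hrW, hΔsplit⟩ := DS m
          have hnpos : 1 ≤ wdeg m := wdeg_pos hm0
          have key : LinearMap.mul' ℚ A (TensorProduct.map S Tl (Δ (word m))) = S (word m) :=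
            W1 (word m)
          have hr' : LinearMap.mul' ℚ A (TensorProduct.map S Tl r) =
              LinearMap.mul' ℚ A (TensorProduct.map S (Eu ∘ₗ ebar) r) := by
            clear hΔsplit
            induction hrW using Submodule.span_induction with
            | mem x hx =>
              obtain ⟨p, q, hq, rfl⟩ := hx
              have hq' : wdeg q < n := by omega
              rw [TensorProduct.map_tmul, TensorProduct.map_tmul, hμt, hμt, hTlapp,
                ih _ hq' q rfl, LinearMap.comp_apply]
            | zero => simp only [map_zero]
            | add x y _ _ hx hy => rw [map_add, map_add, map_add, map_add, hx, hy]
            | smul c x _ hx => rw [map_smul, map_smul, map_smul, map_smul, hx]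
          have h2 : LinearMap.mul' ℚ A (TensorProduct.map S (Eu ∘ₗ ebar) (Δ (word m))) =
              S (word m) := by
            rw [mapEuEbar_right, hcRa, hμt, word_zero, mul_one]
          have h3 : LinearMap.mul' ℚ A
              (TensorProduct.map S (Eu ∘ₗ ebar) (word 0 ⊗ₜ[ℚ] word m)) = 0 := by
            rw [TensorProduct.map_tmul, LinearMap.comp_apply, ebar_word_ne hm0, map_zero,
              TensorProduct.tmul_zero, map_zero]
          have h4 : LinearMap.mul' ℚ A (TensorProduct.map S (Eu ∘ₗ ebar) r) = S (word m) := by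
            rw [hΔsplit, map_add, map_add, h3, zero_add] at h2
            exact h2
          have h5 : LinearMap.mul' ℚ A (TensorProduct.map S Tl (word 0 ⊗ₜ[ℚ] word m)) =
              Tl (word m) := by
            rw [TensorProduct.map_tmul, hμt, hSe, word_zero, one_mul]
          have h6 : Tl (word m) + S (word m) = S (word m) := by
            have e1 : LinearMap.mul' ℚ A (TensorProduct.map S Tl (Δ (word m))) =
                Tl (word m) + LinearMap.mul' ℚ A (TensorProduct.map S Tl r) := by
              rw [hΔsplit, map_add, map_add, h5]
            rw [hr', h4] at e1
            rw [← e1]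
            exact key
          have h7 : Tl (word m) = 0 := add_eq_right.mp h6
          rw [← hTlapp, h7, ebar_word_ne hm0, map_zero]
    exact fun m => main (wdeg m) m rfl
  have hTmap : ((LinearMap.mul' ℚ A) ∘ₗ TensorProduct.map LinearMap.id S) ∘ₗ Δ =
      Eu ∘ₗ ebar := wext fun m => by
    simpa using hT m
  refine ⟨fun a => ⟨hLa a, ?_⟩, fun m hm => ?_⟩
  · simpa using LinearMap.congr_fun hTmap a
  · rw [hL m, ebar_word_ne hm, map_zero]
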